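/- arXiv:2512.24061 — 2 statements merged into one kernel-verified Lean document; each statement's English description precedes it below -/
import Mathlib

section
/- For four distinct points a, b, c, d in the plane in general position, the sign patterns (+,−,+,−) and (−,+,−,+) for (χ(a,b,c), χ(b,c,d), χ(c,d,a), χ(d,a,b)) are not realizable; hence exactly 14 of the 16 sign patterns can occur. -/
def GenPos (S : Set (ℝ × ℝ)) : Prop :=
  ∀ a ∈ S, ∀ b ∈ S, ∀ c ∈ S, a ≠ b → a ≠ c → b ≠ c →
    ¬ Collinear ℝ ({a, b, c} : Set (ℝ × ℝ))

def ConvexPos (S : Set (ℝ × ℝ)) : Prop :=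
  ∀ p ∈ S, p ∉ convexHull ℝ (S \ {p})

noncomputable def det2 (a b c : ℝ × ℝ) : ℝ :=
  (b.1 - a.1) * (c.2 - a.2) - (b.2 - a.2) * (c.1 - a.1)

noncomputable def chi (a b c : ℝ × ℝ) : ℝ := Real.sign (det2 a b c)

lemma sign_pos_of_eq_one {r : ℝ} (h : Real.sign r = 1) : 0 < r := by
  rcases lt_trichotomy r 0 with h1 | h1 | h1
  · rw [Real.sign_of_neg h1] at h; norm_num at h
  · rw [h1, Real.sign_zero] at h; norm_num at h
  · exact h1

lemma sign_neg_of_eq_neg_one {r : ℝ} (h : Real.sign r = -1) : r < 0 := by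
  rcases lt_trichotomy r 0 with h1 | h1 | h1
  · exact h1
  · rw [h1, Real.sign_zero] at h; norm_num at h
  · rw [Real.sign_of_pos h1] at h; norm_num at h

lemma det2_identity (a b c d : ℝ × ℝ) :
    det2 a b c + det2 c d a = det2 b c d + det2 d a b := by
  simp only [det2]; ring

theorem stmt_7 (a b c d : ℝ × ℝ)
    (hdist : List.Pairwise (· ≠ ·) [a, b, c, d])
    (hgp : GenPos {a, b, c, d}) :
    ¬ (chi a b c = 1 ∧ chi b c d = -1 ∧ chi c d a = 1 ∧ chi d a b = -1) ∧
    ¬ (chi a b c = -1 ∧ chi b c d = 1 ∧ chi c d a = -1 ∧ chi d a b = 1) := by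
  have key := det2_identity a b c d
  constructor
  · rintro ⟨h1, h2, h3, h4⟩
    have p1 := sign_pos_of_eq_one h1
    have p2 := sign_neg_of_eq_neg_one h2
    have p3 := sign_pos_of_eq_one h3
    have p4 := sign_neg_of_eq_neg_one h4
    linarith
  · rintro ⟨h1, h2, h3, h4⟩
    have p1 := sign_neg_of_eq_neg_one h1
    have p2 := sign_pos_of_eq_one h2
    have p3 := sign_neg_of_eq_neg_one h3
    have p4 := sign_pos_of_eq_one h4
    linarith
end

section
/- Every set of 5 points in the plane in general position contains 4 points in convex position; that is, ES(4) = 5. -/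
def HasConvex (S : Set (ℝ × ℝ)) (k : ℕ) : Prop :=
  ∃ T ⊆ S, T.ncard = k ∧ ConvexPos T

noncomputable def ES (k : ℕ) : ℕ :=
  sInf {N : ℕ | ∀ S : Set (ℝ × ℝ), S.Finite → N ≤ S.ncard → GenPos S → HasConvex S k}

open Set

@[simp] lemma det2_self_left (a c : ℝ × ℝ) : det2 a a c = 0 := by unfold det2; ring

@[simp] lemma det2_apply_left (a b : ℝ × ℝ) : det2 a b a = 0 := by unfold det2; ring

@[simp] lemma det2_apply_right (a b : ℝ × ℝ) : det2 a b b = 0 := by unfold det2; ring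

lemma det2_swap (a b c : ℝ × ℝ) : det2 b a c = -det2 a b c := by unfold det2; ring

lemma det2_add_add_smul (u v a b c : ℝ × ℝ) {α β γ : ℝ} (h : α + β + γ = 1) :
    det2 u v (α • a + β • b + γ • c) = α * det2 u v a + β * det2 u v b + γ * det2 u v c := by
  obtain rfl : γ = 1 - α - β := by linarith
  simp only [det2, Prod.fst_add, Prod.snd_add, Prod.smul_fst, Prod.smul_snd, smul_eq_mul]
  ring

lemma collinear_iff_det2_eq_zero {a b c : ℝ × ℝ} :
    Collinear ℝ ({a, b, c} : Set (ℝ × ℝ)) ↔ det2 a b c = 0 := by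
  constructor
  · rw [collinear_iff_of_mem (mem_insert a _)]
    rintro ⟨v, hv⟩
    obtain ⟨s, rfl⟩ := hv b (by simp)
    obtain ⟨t, rfl⟩ := hv c (by simp)
    simp only [det2, vadd_eq_add, Prod.fst_add, Prod.snd_add, Prod.smul_fst, Prod.smul_snd,
      smul_eq_mul]
    ring
  · intro h
    rcases eq_or_ne a b with rfl | hab
    · simpa using collinear_pair ℝ a c
    have hn : (b.1 - a.1) ^ 2 + (b.2 - a.2) ^ 2 ≠ 0 := by
      intro h0
      exact hab (Prod.ext (by nlinarith [sq_nonneg (b.1 - a.1), sq_nonneg (b.2 - a.2)])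
        (by nlinarith [sq_nonneg (b.1 - a.1), sq_nonneg (b.2 - a.2)]))
    have hc : c ∈ line[ℝ, a, b] := by
      -- the parameter of the orthogonal projection of `c` onto the line `ab`
      convert AffineMap.lineMap_mem_affineSpan_pair
        (((c.1 - a.1) * (b.1 - a.1) + (c.2 - a.2) * (b.2 - a.2)) /
          ((b.1 - a.1) ^ 2 + (b.2 - a.2) ^ 2)) a b using 1
      unfold det2 at h
      ext <;> simp only [AffineMap.lineMap_apply, vsub_eq_sub, vadd_eq_add, Prod.fst_add,
        Prod.snd_add, Prod.smul_fst, Prod.smul_snd, Prod.fst_sub, Prod.snd_sub, smul_eq_mul] <;>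
        field_simp
      · linear_combination (a.2 - b.2) * h
      · linear_combination (b.1 - a.1) * h
    simpa only [insert_comm c a, pair_comm c b] using collinear_insert_of_mem_affineSpan_pair hc

lemma GenPos.mono {S T : Set (ℝ × ℝ)} (hS : GenPos S) (hTS : T ⊆ S) : GenPos T :=
  fun a ha b hb c hc => hS a (hTS ha) b (hTS hb) c (hTS hc)

lemma HasConvex.mono {S T : Set (ℝ × ℝ)} {k : ℕ} (hT : HasConvex T k) (hTS : T ⊆ S) :
    HasConvex S k :=
  let ⟨U, hUT, hU⟩ := hT
  ⟨U, hUT.trans hTS, hU⟩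

lemma GenPos.det2_ne_zero {S : Set (ℝ × ℝ)} (hS : GenPos S) {a b c : ℝ × ℝ} (ha : a ∈ S)
    (hb : b ∈ S) (hc : c ∈ S) (hab : a ≠ b) (hac : a ≠ c) (hbc : b ≠ c) : det2 a b c ≠ 0 :=
  fun h => hS a ha b hb c hc hab hac hbc (collinear_iff_det2_eq_zero.2 h)

lemma exists_eq_add_add_smul_of_mem_convexHull {𝕜 E : Type*} [Field 𝕜] [LinearOrder 𝕜]
    [IsStrictOrderedRing 𝕜] [AddCommGroup E] [Module 𝕜 E] {a b c x : E}
    (hx : x ∈ convexHull 𝕜 {a, b, c}) :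
    ∃ α β γ : 𝕜, 0 ≤ α ∧ 0 ≤ β ∧ 0 ≤ γ ∧ α + β + γ = 1 ∧ x = α • a + β • b + γ • c := by
  rw [convexHull_insert (insert_nonempty b {c}), convexHull_pair, mem_convexJoin] at hx
  obtain ⟨_, rfl, y, ⟨β, γ, hβ, hγ, hβγ, rfl⟩, α, t, hα, ht, hαt, rfl⟩ := hx
  refine ⟨α, t * β, t * γ, hα, by positivity, by positivity, ?_, ?_⟩
  · linear_combination hαt + t * hβγ
  · simp only [smul_add, smul_smul, add_assoc]

lemma det2_mul_det2_nonneg_of_mem_convexHull {a b q r : ℝ × ℝ} (c : ℝ × ℝ)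
    (hq : q ∈ convexHull ℝ {a, b, c}) (hr : r ∈ convexHull ℝ {a, b, c}) :
    0 ≤ det2 a b q * det2 a b r := by
  obtain ⟨α, β, γ, -, -, hγ, hw, rfl⟩ := exists_eq_add_add_smul_of_mem_convexHull hq
  obtain ⟨α', β', γ', -, -, hγ', hw', rfl⟩ := exists_eq_add_add_smul_of_mem_convexHull hr
  simp only [det2_add_add_smul a b a b c hw, det2_add_add_smul a b a b c hw', det2_apply_left,
    det2_apply_right]
  nlinarith [mul_nonneg (mul_nonneg hγ hγ') (sq_nonneg (det2 a b c))]

lemma notMem_convexHull_of_det2_mul_det2_pos {a b c d : ℝ × ℝ}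
    (h : 0 < det2 a b c * det2 a b d) : a ∉ convexHull ℝ {b, c, d} := by
  intro ha
  obtain ⟨β, γ, δ, hβ, hγ, hδ, hw, hab⟩ := exists_eq_add_add_smul_of_mem_convexHull ha
  -- `det2 a b ·` vanishes at `a` and `b` but has the same strict sign at `c` and `d`
  have hline := det2_add_add_smul a b b c d hw
  rw [← hab, det2_apply_left, det2_apply_right] at hline
  have hc : 0 < det2 a b c * det2 a b c := mul_self_pos.2 (left_ne_zero_of_mul h.ne')
  have hd : 0 < det2 a b d * det2 a b d := mul_self_pos.2 (right_ne_zero_of_mul h.ne')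
  have hγ0 : γ = 0 := by
    have : γ * (det2 a b c * det2 a b c) + δ * (det2 a b c * det2 a b d) = 0 := by
      linear_combination -det2 a b c * hline
    nlinarith [mul_nonneg hδ h.le]
  have hδ0 : δ = 0 := by
    have : γ * (det2 a b c * det2 a b d) + δ * (det2 a b d * det2 a b d) = 0 := by
      linear_combination -det2 a b d * hline
    nlinarith [mul_nonneg hγ h.le]
  obtain rfl : β = 1 := by linarith
  rw [hγ0, hδ0, one_smul, zero_smul, zero_smul, add_zero, add_zero] at hab
  subst hab
  simp at h

lemma convexPos_of_det2_mul_det2_pos {a b c d : ℝ × ℝ}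
    (h₁ : 0 < det2 c d a * det2 c d b) (h₂ : 0 < det2 a b c * det2 a b d) :
    ConvexPos {a, b, c, d} := by
  have h₁' : 0 < det2 d c a * det2 d c b := by rwa [det2_swap c, det2_swap c, neg_mul_neg]
  have h₂' : 0 < det2 b a c * det2 b a d := by rwa [det2_swap a, det2_swap a, neg_mul_neg]
  rintro p (rfl | rfl | rfl | rfl) hp
  · exact notMem_convexHull_of_det2_mul_det2_pos h₂
      (convexHull_mono (sdiff_singleton_subset_iff.2 subset_rfl) hp)
  · exact notMem_convexHull_of_det2_mul_det2_pos h₂'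
      (convexHull_mono (sdiff_singleton_subset_iff.2 (by intro x; simp only [mem_insert_iff, mem_singleton_iff]; tauto)) hp)
  · exact notMem_convexHull_of_det2_mul_det2_pos h₁
      (convexHull_mono (sdiff_singleton_subset_iff.2 (by intro x; simp only [mem_insert_iff, mem_singleton_iff]; tauto)) hp)
  · exact notMem_convexHull_of_det2_mul_det2_pos h₁'
      (convexHull_mono (sdiff_singleton_subset_iff.2 (by intro x; simp only [mem_insert_iff, mem_singleton_iff]; tauto)) hp)

lemma hasConvex_of_det2_mul_det2_pos {S : Set (ℝ × ℝ)} {a b c d : ℝ × ℝ}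
    (hS : ({a, b, c, d} : Set (ℝ × ℝ)) ⊆ S)
    (h₁ : 0 < det2 c d a * det2 c d b) (h₂ : 0 < det2 a b c * det2 a b d) : HasConvex S 4 := by
  refine ⟨{a, b, c, d}, hS, ?_, convexPos_of_det2_mul_det2_pos h₁ h₂⟩
  have : a ≠ b ∧ a ≠ c ∧ a ≠ d ∧ b ≠ c ∧ b ≠ d ∧ c ≠ d := by
    refine ⟨?_, ?_, ?_, ?_, ?_, ?_⟩ <;> rintro rfl <;> simp at h₁ h₂
  obtain ⟨hab, hac, had, hbc, hbd, hcd⟩ := this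
  rw [ncard_insert_of_notMem (by simp [hab, hac, had]), ncard_insert_of_notMem (by simp [hbc, hbd]),
    ncard_pair hcd]

lemma mul_pos_or_mul_pos_or_mul_pos {x y z : ℝ} (hx : x ≠ 0) (hy : y ≠ 0) (hz : z ≠ 0) :
    0 < x * y ∨ 0 < x * z ∨ 0 < y * z := by
  by_contra! h
  obtain ⟨hxy, hxz, hyz⟩ := h
  have : 0 < (x * y * z) ^ 2 := by positivity
  nlinarith [mul_nonneg (mul_nonneg_of_nonpos_of_nonpos hxy hxz) (neg_nonneg.2 hyz)]

lemma hasConvex_of_mem_convexHull_triangle {S : Set (ℝ × ℝ)} (hS : GenPos S)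
    {a b c q r : ℝ × ℝ} (ha : a ∈ S) (hb : b ∈ S) (hc : c ∈ S) (hq : q ∈ S) (hr : r ∈ S)
    (hab : a ≠ b) (hac : a ≠ c) (hbc : b ≠ c) (hqr : q ≠ r)
    (hqT : q ∉ ({a, b, c} : Set (ℝ × ℝ))) (hrT : r ∉ ({a, b, c} : Set (ℝ × ℝ)))
    (hqh : q ∈ convexHull ℝ {a, b, c}) (hrh : r ∈ convexHull ℝ {a, b, c}) :
    HasConvex S 4 := by
  have side : ∀ x ∈ S, ∀ y ∈ S, ∀ z, ({x, y, z} : Set (ℝ × ℝ)) = {a, b, c} → x ≠ y →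
      0 < det2 q r x * det2 q r y → HasConvex S 4 := by
    intro x hx y hy z hxyz hxy h
    rw [← hxyz] at hqh hrh hqT hrT
    have hxq : x ≠ q := ne_of_mem_of_not_mem (by simp) hqT
    have hxr : x ≠ r := ne_of_mem_of_not_mem (by simp) hrT
    have hyq : y ≠ q := ne_of_mem_of_not_mem (by simp) hqT
    have hyr : y ≠ r := ne_of_mem_of_not_mem (by simp) hrT
    refine hasConvex_of_det2_mul_det2_pos (by simp [insert_subset_iff, *]) h
      ((det2_mul_det2_nonneg_of_mem_convexHull z hqh hrh).lt_of_ne' (mul_ne_zero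
        (hS.det2_ne_zero hx hy hq hxy hxq hyq) (hS.det2_ne_zero hx hy hr hxy hxr hyr)))
  have h₀ : ∀ x ∈ ({a, b, c} : Set (ℝ × ℝ)), x ∈ S → det2 q r x ≠ 0 := fun x hxT hx =>
    hS.det2_ne_zero hq hr hx hqr (ne_of_mem_of_not_mem hxT hqT).symm
      (ne_of_mem_of_not_mem hxT hrT).symm
  rcases mul_pos_or_mul_pos_or_mul_pos (h₀ a (by simp) ha) (h₀ b (by simp) hb)
    (h₀ c (by simp) hc) with h | h | h
  · exact side a ha b hb c rfl hab h
  · exact side a ha c hc b (by rw [pair_comm]) hac h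
  · exact side b hb c hc a (by rw [pair_comm c a, insert_comm b a]) hbc h

lemma Set.Finite.convexHull_extremePoints_convexHull {E : Type*} [AddCommGroup E] [Module ℝ E]
    [TopologicalSpace E] [T2Space E] [IsTopologicalAddGroup E] [ContinuousSMul ℝ E]
    [LocallyConvexSpace ℝ E] {s : Set E} (hs : s.Finite) :
    convexHull ℝ ((convexHull ℝ s).extremePoints ℝ) = convexHull ℝ s := by
  have hKM := closure_convexHull_extremePoints (hs.isCompact_convexHull ℝ) (convex_convexHull ℝ s)
  rwa [((hs.subset extremePoints_convexHull_subset).isClosed_convexHull ℝ).closure_eq] at hKM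

lemma convexPos_iff_convexIndependent {T : Set (ℝ × ℝ)} :
    ConvexPos T ↔ ConvexIndependent ℝ ((↑) : T → ℝ × ℝ) :=
  convexIndependent_set_iff_notMem_convexHull_sdiff.symm

lemma hasConvex_four_of_ncard_eq_five {S : Set (ℝ × ℝ)} (hfin : S.Finite) (hcard : S.ncard = 5)
    (hS : GenPos S) : HasConvex S 4 := by
  set E := (convexHull ℝ S).extremePoints ℝ
  have hES : E ⊆ S := extremePoints_convexHull_subset
  by_cases hE : 4 ≤ E.ncard
  · obtain ⟨T, hTE, hT⟩ := exists_subset_card_eq hE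
    exact ⟨T, hTE.trans hES, hT, convexPos_iff_convexIndependent.2
      ((convex_convexHull ℝ S).convexIndependent_extremePoints.mono hTE)⟩
  -- otherwise the hull is spanned by a triangle of points of `S`, containing the other two
  obtain ⟨T, hET, hTS, hT⟩ := exists_subsuperset_card_eq hES (by omega) (by omega : 3 ≤ S.ncard)
  have hST : S ⊆ convexHull ℝ T :=
    calc S ⊆ convexHull ℝ S := subset_convexHull ℝ S
      _ = convexHull ℝ E := hfin.convexHull_extremePoints_convexHull.symm
      _ ⊆ convexHull ℝ T := convexHull_mono hET
  have hrest : (S \ T).ncard = 2 := by rw [ncard_sdiff hTS (hfin.subset hTS)]; omega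
  obtain ⟨a, b, c, hab, hac, hbc, rfl⟩ := ncard_eq_three.1 hT
  obtain ⟨q, r, hqr, hqrS⟩ := ncard_eq_two.1 hrest
  have hq : q ∈ S \ {a, b, c} := hqrS ▸ mem_insert q {r}
  have hr : r ∈ S \ {a, b, c} := hqrS ▸ mem_insert_of_mem q rfl
  exact hasConvex_of_mem_convexHull_triangle hS (hTS (by simp)) (hTS (by simp)) (hTS (by simp))
    hq.1 hr.1 hab hac hbc hqr hq.2 hr.2 (hST hq.1) (hST hr.1)

def triangleWithCentroid : Set (ℝ × ℝ) := {(0, 0), (3, 0), (0, 3), (1, 1)}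

lemma genPos_triangleWithCentroid : GenPos triangleWithCentroid := by
  intro a ha b hb c hc hab hac hbc hcol
  rw [collinear_iff_det2_eq_zero] at hcol
  simp only [triangleWithCentroid, mem_insert_iff, mem_singleton_iff] at ha hb hc
  rcases ha with rfl | rfl | rfl | rfl <;> rcases hb with rfl | rfl | rfl | rfl <;>
    rcases hc with rfl | rfl | rfl | rfl <;>
    first | exact hab rfl | exact hac rfl | exact hbc rfl | norm_num [det2] at hcol

lemma finite_triangleWithCentroid : triangleWithCentroid.Finite := by
  simp [triangleWithCentroid]

lemma ncard_triangleWithCentroid : triangleWithCentroid.ncard = 4 := by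
  rw [triangleWithCentroid, ncard_insert_of_notMem, ncard_insert_of_notMem, ncard_pair] <;>
    norm_num [Prod.ext_iff]

lemma not_hasConvex_triangleWithCentroid : ¬ HasConvex triangleWithCentroid 4 := by
  rintro ⟨T, hT, hcard, hconv⟩
  obtain rfl : T = triangleWithCentroid := eq_of_subset_of_ncard_le hT
    (by rw [hcard, ncard_triangleWithCentroid]) finite_triangleWithCentroid
  refine hconv (1, 1) (by simp [triangleWithCentroid]) ?_
  have hK := convex_convexHull ℝ (triangleWithCentroid \ {(1, 1)})
  have mem : ∀ x ∈ ({(0, 0), (3, 0), (0, 3)} : Set (ℝ × ℝ)),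
      x ∈ convexHull ℝ (triangleWithCentroid \ {(1, 1)}) := fun x hx =>
    subset_convexHull ℝ _ ⟨by simp only [triangleWithCentroid, mem_insert_iff] at hx ⊢; tauto,
      by rcases hx with rfl | rfl | rfl <;> norm_num⟩
  -- `(1, 1)` is the centroid: one third of the way from `(0, 0)` to the midpoint of the opposite side
  have hmid : ((3 / 2 : ℝ), (3 / 2 : ℝ)) ∈ convexHull ℝ (triangleWithCentroid \ {(1, 1)}) :=
    hK.segment_subset (mem (3, 0) (by simp)) (mem (0, 3) (by simp))
      ⟨1 / 2, 1 / 2, by norm_num, by norm_num, by norm_num, by norm_num⟩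
  exact hK.segment_subset (mem (0, 0) (by simp)) hmid
    ⟨1 / 3, 2 / 3, by norm_num, by norm_num, by norm_num, by norm_num⟩

lemma ES_four : ES 4 = 5 := by
  rw [ES, Nat.sInf_upward_closed_eq_succ_iff]
  · refine ⟨fun S hfin hS hgen => ?_, fun h4 => not_hasConvex_triangleWithCentroid
      (h4 _ finite_triangleWithCentroid ncard_triangleWithCentroid.ge genPos_triangleWithCentroid)⟩
    obtain ⟨T, hTS, hT⟩ := exists_subset_card_eq hS
    exact (hasConvex_four_of_ncard_eq_five (hfin.subset hTS) hT (hgen.mono hTS)).mono hTS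
  · exact fun N N' hNN' hN S hfin hS => hN S hfin (hNN'.trans hS)

theorem stmt_11 :
    (∀ S : Set (ℝ × ℝ), S.Finite → S.ncard = 5 → GenPos S → HasConvex S 4) ∧
    ES 4 = 5 :=
  ⟨fun _ => hasConvex_four_of_ncard_eq_five, ES_four⟩
end
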